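/- arXiv:2311.01915 — 3 statements merged into one kernel-verified Lean document; each statement's English description precedes it below -/
import Mathlib

section
/- (Existence via Perron's method) Let G=(V,E) be a graph, X ⊂ V with width(X) < ∞, f: X → ℝ bounded, and g: V∖X → ℝ bounded. Then there exists a bounded function u: V → ℝ satisfying Δ∞u(x) = f(x) for all x ∈ X and u(x) = g(x) for all x ∈ V∖X. -/
/-!
Perron's method. Let `|f| ≤ Cf` on `X`, `|g| ≤ Cg` off `X`, and let `d ≤ W` be the distance
to `Xᶜ` on `X`. The barrier equal to `g` off `X` and to `p (d x)` on `X`, where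
`p k = -Cg - Cf * (2 ^ W - 2 ^ (W - k))`, is a subsolution: a vertex at level `k + 1` has a
neighbour at level at most `k` and none beyond level `W`, and `p k + p W - 2 * p (k + 1) = Cf`.
The same construction for `(-f, -g)`, negated, is a supersolution above it. The supremum `u` of
all subsolutions between the two barriers that agree with `g` off `X` is again one, because
`Δ∞` at `x` is monotone in the values at the neighbours of `x`; and if `Δ∞ u x > f x` at some
`x ∈ X`, raising `u` at `x` alone by a small amount gives a larger member of the family.
-/

noncomputable def infLap {V : Type*} (G : SimpleGraph V) (u : V → ℝ) (x : V) : ℝ :=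
  sInf (u '' {y | G.Adj x y}) + sSup (u '' {y | G.Adj x y}) - 2 * u x

open Set Function

namespace SimpleGraph

variable {V : Type*} (G : SimpleGraph V)

section InfLap

variable {G} {u v : V → ℝ} {x : V}

theorem infLap_add_two_mul_le_of_le (hx : (G.neighborSet x).Nonempty)
    (hvu : ∀ y, G.Adj x y → v y ≤ u y) (hv : BddBelow (range v)) (hu : BddAbove (range u)) :
    infLap G v x + 2 * v x ≤ infLap G u x + 2 * u x := by
  have hinf : sInf (v '' {y | G.Adj x y}) ≤ sInf (u '' {y | G.Adj x y}) :=
    le_csInf (hx.image u) <| forall_mem_image.2 fun y hy =>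
      (csInf_le (hv.mono (image_subset_range _ _)) (mem_image_of_mem v hy)).trans (hvu y hy)
  have hsup : sSup (v '' {y | G.Adj x y}) ≤ sSup (u '' {y | G.Adj x y}) :=
    csSup_le (hx.image v) <| forall_mem_image.2 fun y hy =>
      (hvu y hy).trans (le_csSup (hu.mono (image_subset_range _ _)) (mem_image_of_mem u hy))
  simp only [infLap]
  linarith

theorem infLap_update_self [DecidableEq V] (u : V → ℝ) (x : V) (a : ℝ) :
    infLap G (update u x a) x = infLap G u x + 2 * (u x - a) := by
  have himage : update u x a '' {y | G.Adj x y} = u '' {y | G.Adj x y} :=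
    image_congr fun y hy => update_of_ne (G.ne_of_adj hy).symm _ _
  simp only [infLap, himage, update_self]
  ring

theorem infLap_neg (u : V → ℝ) (x : V) : infLap G (-u) x = -infLap G u x := by
  have himage : ∀ s : Set V, (fun y => -u y) '' s = -(u '' s) := fun s => by
    rw [← image_neg_eq_neg, image_image]
  simp only [infLap, Pi.neg_apply, himage, Real.sInf_neg, Real.sSup_neg]
  ring

end InfLap

section DistCompl

variable {X : Set V} {x y : V}

/-- This is `0` when no walk from `x` reaches `Xᶜ`. -/
noncomputable def distCompl (X : Set V) (x : V) : ℕ :=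
  sInf {n | ∃ y ∈ Xᶜ, ∃ p : G.Walk x y, p.length = n}

variable {G}

theorem distCompl_le_length (hy : y ∈ Xᶜ) (p : G.Walk x y) : G.distCompl X x ≤ p.length :=
  Nat.sInf_le ⟨y, hy, p, rfl⟩

theorem exists_adj_distCompl_lt (hx : x ∈ X) (hy : y ∈ Xᶜ) (p : G.Walk x y) :
    ∃ z, G.Adj x z ∧ G.distCompl X z < G.distCompl X x := by
  obtain ⟨y', hy', q, hq⟩ : ∃ y' ∈ Xᶜ, ∃ q : G.Walk x y', q.length = G.distCompl X x :=
    Nat.sInf_mem (s := {n | ∃ y ∈ Xᶜ, ∃ p : G.Walk x y, p.length = n})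
      ⟨p.length, y, hy, p, rfl⟩
  cases q with
  | nil => exact absurd hx hy'
  | cons hadj q' =>
    refine ⟨_, hadj, ?_⟩
    have := distCompl_le_length hy' q'
    rw [Walk.length_cons] at hq
    omega

end DistCompl

noncomputable def barrierProfile (a b : ℝ) (W k : ℕ) : ℝ :=
  a - b * (2 ^ W - 2 ^ (W - k))

theorem barrierProfile_zero (a b : ℝ) (W : ℕ) : barrierProfile a b W 0 = a := by
  simp [barrierProfile]

theorem barrierProfile_antitone {b : ℝ} (hb : 0 ≤ b) (a : ℝ) (W : ℕ) :
    Antitone (barrierProfile a b W) := fun k l hkl => by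
  have : (2 : ℝ) ^ (W - l) ≤ 2 ^ (W - k) := pow_le_pow_right₀ one_le_two (by omega)
  simp only [barrierProfile]
  nlinarith

theorem barrierProfile_step (a b : ℝ) {W k : ℕ} (hk : k < W) :
    barrierProfile a b W k + barrierProfile a b W W - 2 * barrierProfile a b W (k + 1) = b := by
  obtain ⟨m, rfl⟩ := Nat.exists_eq_add_of_lt hk
  have h₁ : k + m + 1 - k = m + 1 := by omega
  have h₂ : k + m + 1 - (k + 1) = m := by omega
  simp only [barrierProfile, h₁, h₂, Nat.sub_self, pow_succ, pow_zero]
  ring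

theorem exists_subsolution_of_width {X : Set V} {f g : V → ℝ} {W : ℕ} {Cf Cg : ℝ}
    (hW : ∀ x ∈ X, ∃ y ∈ Xᶜ, ∃ w : G.Walk x y, w.length ≤ W) (hCf : 0 ≤ Cf)
    (hf : ∀ x ∈ X, f x ≤ Cf) (hg : ∀ x ∈ Xᶜ, |g x| ≤ Cg) :
    ∃ v : V → ℝ, BddBelow (range v) ∧ (∀ x ∈ X, v x ≤ -Cg) ∧ (∀ x ∈ Xᶜ, v x = g x) ∧
      ∀ x ∈ X, f x ≤ infLap G v x := by
  classical
  set p := barrierProfile (-Cg) Cf W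
  have hp : Antitone p := barrierProfile_antitone hCf _ _
  have hp0 : p 0 = -Cg := barrierProfile_zero _ _ _
  have hdist : ∀ x ∈ X, G.distCompl X x ≤ W := fun x hx => by
    obtain ⟨y, hy, w, hw⟩ := hW x hx
    exact (distCompl_le_length hy w).trans hw
  set v : V → ℝ := fun x => if x ∈ X then p (G.distCompl X x) else g x
  have hv_compl : ∀ x ∈ Xᶜ, v x = g x := fun x hx => if_neg hx
  have hv_le : ∀ x ∈ X, v x ≤ -Cg := fun x hx => by
    simpa only [v, if_pos hx, ← hp0] using hp (Nat.zero_le _)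
  have hv_ge : ∀ x k, (x ∈ X → G.distCompl X x ≤ k) → p k ≤ v x := fun x k hk => by
    by_cases hx : x ∈ X
    · simpa only [v, if_pos hx] using hp (hk hx)
    · rw [hv_compl x hx]
      exact (hp (Nat.zero_le k)).trans (hp0 ▸ (abs_le.1 (hg x hx)).1)
  have hv_bdd : BddAbove (range v) := ⟨max Cg (-Cg), forall_mem_range.2 fun x => by
    by_cases hx : x ∈ X
    · exact (hv_le x hx).trans (le_max_right _ _)
    · exact (hv_compl x hx ▸ (abs_le.1 (hg x hx)).2).trans (le_max_left _ _)⟩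
  refine ⟨v, ⟨p W, forall_mem_range.2 fun x => hv_ge x W (hdist x)⟩, hv_le, hv_compl,
    fun x hx => ?_⟩
  obtain ⟨y, hy, w, -⟩ := hW x hx
  obtain ⟨z, hxz, hz⟩ := exists_adj_distCompl_lt hx hy w
  obtain ⟨k, hk⟩ : ∃ k, G.distCompl X x = k + 1 := Nat.exists_eq_succ_of_ne_zero (by omega)
  have hinf : p W ≤ sInf (v '' {y | G.Adj x y}) :=
    le_csInf ⟨v z, z, hxz, rfl⟩ <| forall_mem_image.2 fun y _ => hv_ge y W (hdist y)
  have hsup : p k ≤ sSup (v '' {y | G.Adj x y}) :=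
    (hv_ge z k fun _ => by omega).trans <|
      le_csSup (hv_bdd.mono (image_subset_range _ _)) ⟨z, hxz, rfl⟩
  have hstep : p k + p W - 2 * p (k + 1) = Cf :=
    barrierProfile_step _ _ (by have := hdist x hx; omega)
  have hvx : v x = p (k + 1) := by simp only [v, if_pos hx, hk]
  rw [infLap, hvx]
  linarith [hf x hx]

section Perron

variable {X : Set V} {f g lower upper : V → ℝ}

def perronFamily (X : Set V) (f g lower upper : V → ℝ) : Set (V → ℝ) :=
  {v | lower ≤ v ∧ v ≤ upper ∧ (∀ x ∈ Xᶜ, v x = g x) ∧ ∀ x ∈ X, f x ≤ infLap G v x}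

variable {G}

theorem bddAbove_perronFamily : BddAbove (G.perronFamily X f g lower upper) :=
  ⟨upper, fun _ hv => hv.2.1⟩

theorem le_infLap_sSup_perronFamily (hne : ∀ x ∈ X, (G.neighborSet x).Nonempty)
    (hlow : BddBelow (range lower)) (hup : BddAbove (range upper))
    (hS : (G.perronFamily X f g lower upper).Nonempty) {x : V} (hx : x ∈ X) :
    f x ≤ infLap G (sSup (G.perronFamily X f g lower upper)) x := by
  set S := G.perronFamily X f g lower upper
  have hu_up : BddAbove (range (sSup S)) := hup.range_mono _ (csSup_le hS fun _ hv => hv.2.1)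
  have hv_le : ∀ v ∈ S, v x ≤ (infLap G (sSup S) x + 2 * sSup S x - f x) / 2 := fun v hv => by
    have := infLap_add_two_mul_le_of_le (hne x hx)
      (fun y _ => le_csSup bddAbove_perronFamily hv y) (hlow.range_mono _ hv.1) hu_up
    linarith [hv.2.2.2 x hx]
  have hu_le : sSup S x ≤ (infLap G (sSup S) x + 2 * sSup S x - f x) / 2 :=
    sSup_apply_eq_sSup_image.trans_le (csSup_le (hS.image _) (forall_mem_image.2 hv_le))
  linarith

theorem sSup_perronFamily_mem (hne : ∀ x ∈ X, (G.neighborSet x).Nonempty)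
    (hlow : BddBelow (range lower)) (hup : BddAbove (range upper))
    (hS : (G.perronFamily X f g lower upper).Nonempty) :
    sSup (G.perronFamily X f g lower upper) ∈ G.perronFamily X f g lower upper := by
  set S := G.perronFamily X f g lower upper
  obtain ⟨v, hv⟩ := hS
  have hv_le : v ≤ sSup S := le_csSup bddAbove_perronFamily hv
  refine ⟨hv.1.trans hv_le, csSup_le ⟨v, hv⟩ fun _ hw => hw.2.1, fun x hx => ?_,
    fun x hx => le_infLap_sSup_perronFamily hne hlow hup ⟨v, hv⟩ hx⟩
  refine le_antisymm ?_ (hv.2.2.1 x hx ▸ hv_le x)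
  rw [sSup_apply_eq_sSup_image]
  exact csSup_le (Nonempty.image _ ⟨v, hv⟩)
    (forall_mem_image.2 fun w hw => (hw.2.2.1 x hx).le)

theorem update_mem_perronFamily [DecidableEq V] (hne : ∀ x ∈ X, (G.neighborSet x).Nonempty)
    (hlow : BddBelow (range lower)) (hup : BddAbove (range upper))
    {v : V → ℝ} (hv : v ∈ G.perronFamily X f g lower upper) {x : V} (hx : x ∈ X) {ε : ℝ}
    (hε : 0 ≤ ε) (hεf : 2 * ε ≤ infLap G v x - f x) (hεu : v x + ε ≤ upper x) :
    update v x (v x + ε) ∈ G.perronFamily X f g lower upper := by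
  obtain ⟨hv_low, hv_up, hv_compl, hv_sub⟩ := hv
  have hv_le : v ≤ update v x (v x + ε) := le_update_self_iff.2 (by linarith)
  have hle_up : update v x (v x + ε) ≤ upper := update_le_iff.2 ⟨hεu, fun z _ => hv_up z⟩
  refine ⟨hv_low.trans hv_le, hle_up, fun z hz => ?_, fun z hz => ?_⟩
  · rw [update_of_ne (ne_of_mem_of_not_mem hx hz).symm, hv_compl z hz]
  · rcases eq_or_ne z x with rfl | hzx
    · rw [infLap_update_self]
      linarith
    · have := infLap_add_two_mul_le_of_le (hne z hz) (fun y _ => hv_le y)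
        (hlow.range_mono _ hv_low) (hup.range_mono _ hle_up)
      rw [update_of_ne hzx] at this
      linarith [hv_sub z hz]

theorem infLap_sSup_perronFamily_le (hne : ∀ x ∈ X, (G.neighborSet x).Nonempty)
    (hlow : BddBelow (range lower)) (hup : BddAbove (range upper))
    (hS : (G.perronFamily X f g lower upper).Nonempty)
    (hsuper : ∀ x ∈ X, infLap G upper x ≤ f x) {x : V} (hx : x ∈ X) :
    infLap G (sSup (G.perronFamily X f g lower upper)) x ≤ f x := by
  classical
  set S := G.perronFamily X f g lower upper
  set u := sSup S
  have hu : u ∈ S := sSup_perronFamily_mem hne hlow hup hS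
  by_contra! hlt
  have hux : u x < upper x := by
    refine lt_of_le_of_ne (hu.2.1 x) fun hEq => ?_
    have := infLap_add_two_mul_le_of_le (hne x hx) (fun y _ => hu.2.1 y)
      (hlow.range_mono _ hu.1) hup
    linarith [hsuper x hx]
  set ε := min ((infLap G u x - f x) / 2) (upper x - u x)
  have hε : 0 < ε := lt_min (by linarith) (by linarith)
  have hbump := update_mem_perronFamily hne hlow hup hu hx hε.le
    (by linarith [min_le_left ((infLap G u x - f x) / 2) (upper x - u x)])
    (by linarith [min_le_right ((infLap G u x - f x) / 2) (upper x - u x)])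
  have := le_csSup bddAbove_perronFamily hbump x
  rw [update_self] at this
  linarith

theorem exists_eq_infLap_of_subsolution_le_supersolution
    (hne : ∀ x ∈ X, (G.neighborSet x).Nonempty)
    (hlow : BddBelow (range lower)) (hup : BddAbove (range upper)) (hle : lower ≤ upper)
    (hlower_compl : ∀ x ∈ Xᶜ, lower x = g x) (hlower : ∀ x ∈ X, f x ≤ infLap G lower x)
    (hupper : ∀ x ∈ X, infLap G upper x ≤ f x) :
    ∃ u : V → ℝ, lower ≤ u ∧ u ≤ upper ∧ (∀ x ∈ X, infLap G u x = f x) ∧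
      ∀ x ∈ Xᶜ, u x = g x := by
  have hS : (G.perronFamily X f g lower upper).Nonempty :=
    ⟨lower, le_rfl, hle, hlower_compl, hlower⟩
  obtain ⟨hu_low, hu_up, hu_compl, hu_sub⟩ := sSup_perronFamily_mem hne hlow hup hS
  exact ⟨_, hu_low, hu_up, fun x hx =>
    (infLap_sSup_perronFamily_le hne hlow hup hS hupper hx).antisymm (hu_sub x hx), hu_compl⟩

end Perron

end SimpleGraph

/-- Existence: on a subset `X` of finite width, for bounded `f` and bounded boundary
data `g`, there exists a bounded solution of `Δ∞ u = f` on `X`, `u = g` on `V∖X`. -/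
theorem stmt_4 {V : Type*} (G : SimpleGraph V) (X : Set V) (f g : V → ℝ)
    (hwidth : ∃ W : ℕ, ∀ x ∈ X, ∃ y ∈ Xᶜ, ∃ w : G.Walk x y, w.length ≤ W)
    (hfbdd : ∃ C, ∀ x ∈ X, |f x| ≤ C)
    (hgbdd : ∃ C, ∀ x ∈ Xᶜ, |g x| ≤ C) :
    ∃ u : V → ℝ, (∃ C, ∀ x, |u x| ≤ C) ∧
      (∀ x ∈ X, infLap G u x = f x) ∧ (∀ x ∈ Xᶜ, u x = g x) := by
  obtain ⟨W, hW⟩ := hwidth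
  obtain ⟨Cf, hf⟩ := hfbdd
  obtain ⟨Cg, hg⟩ := hgbdd
  have hCf : 0 ≤ max Cf 0 := le_max_right _ _
  have hf' : ∀ x ∈ X, |f x| ≤ max Cf 0 := fun x hx => (hf x hx).trans (le_max_left _ _)
  have hg' : ∀ x ∈ Xᶜ, |g x| ≤ max Cg 0 := fun x hx => (hg x hx).trans (le_max_left _ _)
  obtain ⟨v, ⟨a, ha⟩, hv_le, hv_compl, hv_sub⟩ := G.exists_subsolution_of_width hW hCf
    (fun x hx => (le_abs_self _).trans (hf' x hx)) hg'
  obtain ⟨w, ⟨b, hb⟩, hw_le, hw_compl, hw_sub⟩ := G.exists_subsolution_of_width (f := -f)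
    (g := -g) hW hCf (fun x hx => (neg_le_abs _).trans (hf' x hx))
    (fun x hx => (abs_neg (g x)).trans_le (hg' x hx))
  have hne : ∀ x ∈ X, (G.neighborSet x).Nonempty := fun x hx =>
    let ⟨_, hy, p, _⟩ := hW x hx
    ⟨_, p.adj_snd (SimpleGraph.Walk.not_nil_of_ne (ne_of_mem_of_not_mem hx hy))⟩
  have hvw : v ≤ -w := fun x => by
    by_cases hx : x ∈ X
    · show v x ≤ -w x
      linarith [hv_le x hx, hw_le x hx, le_max_right Cg 0]
    · simp [hv_compl x hx, hw_compl x hx]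
  have hw_super : ∀ x ∈ X, infLap G (-w) x ≤ f x := fun x hx => by
    rw [SimpleGraph.infLap_neg]
    linarith [show -f x ≤ infLap G w x from hw_sub x hx]
  obtain ⟨u, hvu, huw, hu_eq, hu_compl⟩ :=
    SimpleGraph.exists_eq_infLap_of_subsolution_le_supersolution hne ⟨a, ha⟩
      ⟨-b, forall_mem_range.2 fun x => neg_le_neg (hb (mem_range_self x))⟩ hvw hv_compl hv_sub
      hw_super
  exact ⟨u, ⟨max |a| |-b|, fun x => abs_le_max_abs_abs ((ha (mem_range_self x)).trans (hvu x))
    ((huw x).trans (neg_le_neg (hb (mem_range_self x))))⟩, hu_eq, hu_compl⟩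
end

section
/- (Perron infimum is a supersolution) Let G=(V,E) be a graph, X ⊂ V, f: X → ℝ, g: V∖X → ℝ, and A = {v bounded on V : Δ∞v ≤ f on X, v ≥ g on V∖X}. Assume A ≠ ∅ and u := inf_{v∈A} v is finite and bounded. Then Δ∞u(x) ≥ f(x) for all x ∈ X. (Proof idea: if Δ∞u(x₀) < f(x₀), then u − ε·1_{x₀} ∈ A for small ε > 0, contradicting minimality.) -/
open Set Function

section ImageMono

variable {V : Type*} {s : Set V} {u v : V → ℝ}

lemma sInf_image_le_sInf_image (hu : BddBelow (u '' s)) (h : ∀ y ∈ s, u y ≤ v y) :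
    sInf (u '' s) ≤ sInf (v '' s) := by
  rcases s.eq_empty_or_nonempty with rfl | hs
  · simp
  · refine le_csInf (hs.image v) ?_
    rintro _ ⟨y, hy, rfl⟩
    exact (csInf_le hu ⟨y, hy, rfl⟩).trans (h y hy)

lemma sSup_image_le_sSup_image (hv : BddAbove (v '' s)) (h : ∀ y ∈ s, u y ≤ v y) :
    sSup (u '' s) ≤ sSup (v '' s) := by
  rcases s.eq_empty_or_nonempty with rfl | hs
  · simp
  · refine csSup_le (hs.image u) ?_
    rintro _ ⟨y, hy, rfl⟩
    exact (h y hy).trans (le_csSup hv ⟨y, hy, rfl⟩)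

end ImageMono

section Bounds

variable {V : Type*} {u : V → ℝ} {C : ℝ}

lemma bddBelow_range_of_abs_le (h : ∀ x, |u x| ≤ C) : BddBelow (range u) :=
  ⟨-C, by rintro _ ⟨x, rfl⟩; exact (abs_le.mp (h x)).1⟩

lemma bddAbove_range_of_abs_le (h : ∀ x, |u x| ≤ C) : BddAbove (range u) :=
  ⟨C, by rintro _ ⟨x, rfl⟩; exact (abs_le.mp (h x)).2⟩

lemma abs_update_sub_le [DecidableEq V] (h : ∀ x, |u x| ≤ C) (x₀ : V) {δ : ℝ} (hδ : 0 ≤ δ)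
    (x : V) : |update u x₀ (u x₀ - δ) x| ≤ C + δ := by
  rcases eq_or_ne x x₀ with rfl | hx
  · rw [update_self]
    calc |u x - δ| ≤ |u x| + |δ| := abs_sub _ _
      _ ≤ C + δ := by rw [abs_of_nonneg hδ]; linarith [h x]
  · rw [update_of_ne hx]
    linarith [h x]

end Bounds

section InfLap

variable {V : Type*} (G : SimpleGraph V)

lemma infLap_add_two_mul_le {u v : V → ℝ} (hu : BddBelow (range u)) (hv : BddAbove (range v))
    (h : u ≤ v) (x : V) : infLap G u x + 2 * u x ≤ infLap G v x + 2 * v x := by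
  have hinf := sInf_image_le_sInf_image (s := {y | G.Adj x y}) (hu.mono (image_subset_range _ _))
    (fun y _ => h y)
  have hsup := sSup_image_le_sSup_image (s := {y | G.Adj x y}) (hv.mono (image_subset_range _ _))
    (fun y _ => h y)
  unfold infLap
  linarith

lemma infLap_update_self [DecidableEq V] (u : V → ℝ) (x : V) (a : ℝ) :
    infLap G (update u x a) x = infLap G u x + 2 * (u x - a) := by
  have himage : update u x a '' {y | G.Adj x y} = u '' {y | G.Adj x y} :=
    image_congr fun y hy => update_of_ne (G.ne_of_adj hy).symm a u
  unfold infLap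
  rw [himage, update_self]
  ring

end InfLap

section Perron

variable {V : Type*} (G : SimpleGraph V) (X : Set V) (f g : V → ℝ)

def perronFamily : Set (V → ℝ) :=
  {v | (∃ C, ∀ x, |v x| ≤ C) ∧ (∀ x ∈ X, infLap G v x ≤ f x) ∧ (∀ x ∈ Xᶜ, g x ≤ v x)}

variable {G X f g}

theorem mem_perronFamily_of_isGLB {u : V → ℝ} (hub : ∃ C, ∀ x, |u x| ≤ C)
    (hglb : ∀ x, IsGLB {r | ∃ v ∈ perronFamily G X f g, v x = r} (u x)) :
    u ∈ perronFamily G X f g := by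
  obtain ⟨C, hC⟩ := hub
  have hle : ∀ v ∈ perronFamily G X f g, u ≤ v := fun v hv x => (hglb x).1 ⟨v, hv, rfl⟩
  refine ⟨⟨C, hC⟩, fun x hx => le_of_forall_pos_le_add fun ε hε => ?_, fun x hx => ?_⟩
  · obtain ⟨_, ⟨v, hv, rfl⟩, -, hvx⟩ := (hglb x).exists_between_self_add (half_pos hε)
    obtain ⟨D, hD⟩ := hv.1
    have hmono := infLap_add_two_mul_le G (bddBelow_range_of_abs_le hC)
      (bddAbove_range_of_abs_le hD) (hle v hv) x
    linarith [hv.2.1 x hx]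
  · exact (hglb x).2 fun _ ⟨v, hv, hvx⟩ => hvx ▸ hv.2.2 x hx

theorem update_sub_mem_perronFamily [DecidableEq V] {u : V → ℝ} (hu : u ∈ perronFamily G X f g)
    {x₀ : V} (hx₀X : x₀ ∈ X) {δ : ℝ} (hδ : 0 ≤ δ) (hx₀ : infLap G u x₀ + 2 * δ ≤ f x₀) :
    update u x₀ (u x₀ - δ) ∈ perronFamily G X f g := by
  obtain ⟨⟨C, hC⟩, huf, hug⟩ := hu
  set w := update u x₀ (u x₀ - δ)
  have hwC : ∀ x, |w x| ≤ C + δ := abs_update_sub_le hC x₀ hδ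
  have hwu : w ≤ u := fun x => by
    rcases eq_or_ne x x₀ with rfl | hx
    · simp [w, hδ]
    · simp [w, update_of_ne hx]
  refine ⟨⟨C + δ, hwC⟩, fun x hx => ?_, fun x hx => ?_⟩
  · rcases eq_or_ne x x₀ with rfl | hne
    · rw [infLap_update_self]
      linarith
    · have hmono := infLap_add_two_mul_le G (bddBelow_range_of_abs_le hwC)
        (bddAbove_range_of_abs_le hC) hwu x
      rw [show w x = u x from update_of_ne hne _ _] at hmono
      linarith [huf x hx]
  · rw [show w x = u x from update_of_ne (ne_of_mem_of_not_mem hx₀X hx).symm _ _]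
    exact hug x hx

end Perron

/-- The Perron infimum of the family `A = {v bounded : Δ∞ v ≤ f on X, v ≥ g on V∖X}`,
when finite and bounded, is a supersolution: `Δ∞ u ≥ f` on `X`. -/
theorem stmt_7 {V : Type*} (G : SimpleGraph V) (X : Set V) (f g : V → ℝ)
    (A : Set (V → ℝ))
    (hA : A = {v | (∃ C, ∀ x, |v x| ≤ C) ∧ (∀ x ∈ X, infLap G v x ≤ f x) ∧
      (∀ x ∈ Xᶜ, g x ≤ v x)})
    (hAne : A.Nonempty)
    (u : V → ℝ) (hu : ∀ x, u x = sInf {r | ∃ v ∈ A, v x = r})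
    (hfin : ∀ x, BddBelow {r | ∃ v ∈ A, v x = r})
    (hubdd : ∃ C, ∀ x, |u x| ≤ C) :
    ∀ x ∈ X, f x ≤ infLap G u x := by
  classical
  change A = perronFamily G X f g at hA
  subst hA
  have hglb : ∀ x, IsGLB {r | ∃ v ∈ perronFamily G X f g, v x = r} (u x) := fun x => by
    obtain ⟨v, hv⟩ := hAne
    rw [hu x]
    exact isGLB_csInf ⟨v x, v, hv, rfl⟩ (hfin x)
  have huA := mem_perronFamily_of_isGLB hubdd hglb
  intro x₀ hx₀
  by_contra! hlt
  have hδ : 0 < (f x₀ - infLap G u x₀) / 2 := by linarith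
  have hwA := update_sub_mem_perronFamily huA hx₀ hδ.le (by linarith)
  have hle : u x₀ ≤ update u x₀ (u x₀ - (f x₀ - infLap G u x₀) / 2) x₀ :=
    (hglb x₀).1 ⟨_, hwA, rfl⟩
  rw [update_self] at hle
  linarith
end

section
/- (Multiple bounded solutions when width is infinite) On the comb graph with tooth lengths l_n = (n+C)³ for C ≥ 2, the Dirichlet problem Δ∞u(n,l) = −f(n,l) for l < l_n, u(n,l_n) = 0, with f(n,0)=1/l_n and f(n,l)=0 for 0 < l < l_n, admits at least two distinct bounded solutions: u(n,l) = (l_n−l)/l_n, and v defined by v(0,0) = l₀·Σ_{k≥0} 1/l_k, v(n,0) = v(n−1,0) + Σ_{k≥n} 1/l_k, and v(n,l) = ((l_n−l)/l_n)·v(n,0). -/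
/-- The comb graph with tooth lengths `l`. -/
def combGraph (l : ℕ → ℕ) : SimpleGraph {p : ℕ × ℕ // p.2 ≤ l p.1} :=
  SimpleGraph.fromRel (fun p q =>
    (p.1.2 = 0 ∧ q.1.2 = 0 ∧ q.1.1 = p.1.1 + 1) ∨
    (p.1.1 = q.1.1 ∧ q.1.2 = p.1.2 + 1))

/-- The values of the second solution `v` along the shaft of the comb:
`v(0,0) = l₀ Σ_{k≥0} 1/l_k`, `v(n,0) = v(n-1,0) + Σ_{k≥n} 1/l_k`. -/
noncomputable def shaftValue (l : ℕ → ℕ) : ℕ → ℝ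
  | 0 => (l 0 : ℝ) * ∑' k : ℕ, (1 : ℝ) / (l k : ℝ)
  | n + 1 => shaftValue l n + ∑' k : ℕ, (1 : ℝ) / (l (n + 1 + k) : ℝ)

/-!
Both `u` and `v` have the form `(1 - k/lₙ) aₙ` on the tooth over `(n,0)`:
linear along every tooth, hence infinity-harmonic there, and zero at the tips.
At a shaft vertex `(n+1,0)` only the smallest and the largest of `aₙ`, `aₙ₊₂`
and the tooth value `(1 - 1/lₙ₊₁) aₙ₊₁` matter. For `a = 1` these are
`1 - 1/lₙ₊₁` and `1`. For `aₙ = v(n,0)` and the tails `Tₙ = Σ_{k≥n} 1/l_k`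
they are `aₙ` and `aₙ₊₂` as soon as `aₙ ≤ lₙ Tₙ`, and then the second
difference is `Tₙ₊₂ - Tₙ₊₁ = -1/lₙ₊₁`.

For `lₙ = x³`, `x = n + C`, the inequality `aₙ ≤ lₙ Tₙ` propagates along the
shaft because `lₙ₊₁ - lₙ - 1 = 3x(x+1)` and `Tₙ₊₁ ≥ 1/(2(x+1)²)`, while
`Tₙ₊₁ ≤ 1/(2x) - 1/(2(x+1))` keeps `v` bounded. Both tail estimates come from
comparing `1/y³` with telescoping differences. Finally
`v(0,0) = 1 + l₀ T₁ > 1 = u(0,0)`.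
-/

open Filter Topology

theorem hasSum_sub_succ_of_antitone {g : ℕ → ℝ} (hg : Antitone g)
    (hlim : Tendsto g atTop (𝓝 0)) : HasSum (fun k => g k - g (k + 1)) (g 0) := by
  rw [hasSum_iff_tendsto_nat_of_nonneg fun k => sub_nonneg.2 (hg k.le_succ)]
  simp_rw [Finset.sum_range_sub']
  simpa using tendsto_const_nhds.sub hlim

theorem summable_one_div_add_pow_three (x : ℝ) : Summable fun k : ℕ => 1 / (x + k) ^ 3 := by
  refine Summable.of_norm (((Real.summable_one_div_nat_add_rpow x 3).2 (by norm_num)).congr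
    fun k => ?_)
  rw [norm_div, norm_one, norm_pow, Real.norm_eq_abs, add_comm]
  norm_cast

theorem one_div_two_mul_sq_le_tsum_one_div_add_pow_three {x : ℝ} (hx : 0 < x) :
    1 / (2 * x ^ 2) ≤ ∑' k : ℕ, 1 / (x + k) ^ 3 := by
  set g : ℕ → ℝ := fun k => 1 / (2 * (x + k) ^ 2)
  have hg : Antitone g := antitone_nat_of_succ_le fun k => by
    simp only [g]; gcongr; linarith
  have hlim : Tendsto g atTop (𝓝 0) := by
    have h : Tendsto (fun k : ℕ => x + k) atTop atTop :=
      tendsto_atTop_add_const_left _ _ tendsto_natCast_atTop_atTop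
    exact (((tendsto_pow_atTop two_ne_zero).comp h).const_mul_atTop two_pos).inv_tendsto_atTop.congr
      fun k => (one_div _).symm
  have := hasSum_le (fun k => ?_) (hasSum_sub_succ_of_antitone hg hlim)
    (summable_one_div_add_pow_three x).hasSum
  · simpa [g] using this
  have hy : 0 < x + k := by positivity
  simp only [g]
  push_cast
  rw [div_sub_div _ _ (by positivity) (by positivity),
    div_le_div_iff₀ (by positivity) (by positivity)]
  nlinarith [pow_pos hy 3]

theorem tsum_one_div_add_pow_three_le {x : ℝ} (hx : 1 < x) :
    ∑' k : ℕ, 1 / (x + k) ^ 3 ≤ 1 / (2 * (x - 1) * x) := by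
  set g : ℕ → ℝ := fun k => 1 / (2 * (x + k - 1) * (x + k))
  have hg : Antitone g := antitone_nat_of_succ_le fun k => by
    simp only [g]
    have : 0 < x + k - 1 := by have := k.cast_nonneg (α := ℝ); linarith
    gcongr <;> push_cast <;> linarith
  have hlim : Tendsto g atTop (𝓝 0) := by
    have h : Tendsto (fun k : ℕ => x + k) atTop atTop :=
      tendsto_atTop_add_const_left _ _ tendsto_natCast_atTop_atTop
    have h' : Tendsto (fun k : ℕ => x + k - 1) atTop atTop := tendsto_atTop_add_const_right _ _ h
    exact ((h'.const_mul_atTop two_pos).atTop_mul_atTop₀ h).inv_tendsto_atTop.congr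
      fun k => (one_div _).symm
  have := hasSum_le (fun k => ?_) (summable_one_div_add_pow_three x).hasSum
    (hasSum_sub_succ_of_antitone hg hlim)
  · simpa [g] using this
  have h₀ : 0 < x + k - 1 := by have := k.cast_nonneg (α := ℝ); linarith
  have h₁ : 0 < x + (k + 1) - 1 := by linarith
  simp only [g]
  push_cast
  rw [div_sub_div _ _ (by positivity) (by positivity),
    div_le_div_iff₀ (by positivity) (by positivity)]
  nlinarith [pow_pos h₀ 3, mul_pos h₀ (by linarith : (0:ℝ) < x + k + 1)]

section InfLap

variable {V : Type*} {G : SimpleGraph V} {w : V → ℝ} {x : V}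

theorem infLap_of_neighborSet_eq_pair {y₁ y₂ : V} (h : G.neighborSet x = {y₁, y₂}) :
    infLap G w x = w y₁ + w y₂ - 2 * w x := by
  change sInf (w '' G.neighborSet x) + sSup (w '' G.neighborSet x) - 2 * w x = _
  rw [h, Set.image_pair, csInf_pair, csSup_pair, min_add_max]

theorem infLap_of_neighborSet_eq_triple {y₁ y₂ y₃ : V}
    (h : G.neighborSet x = {y₁, y₂, y₃}) (h₁ : w y₁ ≤ w y₃) (h₂ : w y₂ ≤ w y₃) :
    infLap G w x = min (w y₁) (w y₂) + w y₃ - 2 * w x := by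
  change sInf (w '' G.neighborSet x) + sSup (w '' G.neighborSet x) - 2 * w x = _
  have hmin : IsLeast (w '' G.neighborSet x) (min (w y₁) (w y₂)) := by
    rw [h, Set.image_insert_eq, Set.image_pair]
    refine ⟨?_, ?_⟩
    · rcases min_choice (w y₁) (w y₂) with h' | h' <;> simp [h']
    · simp only [lowerBounds, Set.mem_insert_iff, Set.mem_singleton_iff, forall_eq_or_imp,
        forall_eq]
      exact ⟨min_le_left _ _, min_le_right _ _, (min_le_left _ _).trans h₁⟩
  have hmax : IsGreatest (w '' G.neighborSet x) (w y₃) := by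
    rw [h, Set.image_insert_eq, Set.image_pair]
    refine ⟨by simp, ?_⟩
    simp only [upperBounds, Set.mem_insert_iff, Set.mem_singleton_iff, forall_eq_or_imp, forall_eq]
    exact ⟨h₁, h₂, le_rfl⟩
  rw [hmin.csInf_eq, hmax.csSup_eq]

end InfLap

namespace combGraph

variable {l : ℕ → ℕ}

theorem neighborSet_tooth {n k : ℕ} (h₀ : 0 < k) (hk : k < l n) :
    (combGraph l).neighborSet ⟨(n, k), hk.le⟩ =
      {⟨(n, k - 1), by dsimp; omega⟩, ⟨(n, k + 1), hk⟩} := by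
  ext ⟨⟨a, b⟩, hb⟩
  simp only [combGraph, SimpleGraph.mem_neighborSet, SimpleGraph.fromRel_adj, Set.mem_insert_iff,
    Set.mem_singleton_iff, Subtype.mk.injEq, Prod.mk.injEq, ne_eq]
  omega

theorem neighborSet_origin (h : 0 < l 0) :
    (combGraph l).neighborSet ⟨(0, 0), Nat.zero_le _⟩ =
      {⟨(0, 1), h⟩, ⟨(1, 0), Nat.zero_le _⟩} := by
  ext ⟨⟨a, b⟩, hb⟩
  simp only [combGraph, SimpleGraph.mem_neighborSet, SimpleGraph.fromRel_adj, Set.mem_insert_iff,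
    Set.mem_singleton_iff, Subtype.mk.injEq, Prod.mk.injEq, ne_eq, true_and]
  omega

theorem neighborSet_shaft_succ {n : ℕ} (h : 0 < l (n + 1)) :
    (combGraph l).neighborSet ⟨(n + 1, 0), Nat.zero_le _⟩ =
      {⟨(n, 0), Nat.zero_le _⟩, ⟨(n + 1, 1), h⟩, ⟨(n + 2, 0), Nat.zero_le _⟩} := by
  ext ⟨⟨a, b⟩, hb⟩
  simp only [combGraph, SimpleGraph.mem_neighborSet, SimpleGraph.fromRel_adj, Set.mem_insert_iff,
    Set.mem_singleton_iff, Subtype.mk.injEq, Prod.mk.injEq, ne_eq, true_and]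
  omega

end combGraph

noncomputable def tailSum (l : ℕ → ℕ) (n : ℕ) : ℝ := ∑' k : ℕ, 1 / (l (n + k) : ℝ)

section ShaftValue

variable {l : ℕ → ℕ}

theorem tailSum_nonneg (n : ℕ) : 0 ≤ tailSum l n := tsum_nonneg fun _ => by positivity

theorem tailSum_eq_add (hs : Summable fun k => 1 / (l k : ℝ)) (n : ℕ) :
    tailSum l n = 1 / l n + tailSum l (n + 1) := by
  have hs' : Summable fun k => 1 / (l (n + k) : ℝ) :=
    ((summable_nat_add_iff n).2 hs).congr fun k => by rw [add_comm]
  rw [tailSum, hs'.tsum_eq_zero_add, tailSum]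
  simp only [add_zero, add_assoc, add_comm 1]

theorem shaftValue_zero : shaftValue l 0 = l 0 * tailSum l 0 := by
  simp [shaftValue, tailSum]

theorem shaftValue_succ (n : ℕ) : shaftValue l (n + 1) = shaftValue l n + tailSum l (n + 1) :=
  rfl

theorem shaftValue_nonneg (n : ℕ) : 0 ≤ shaftValue l n := by
  induction n with
  | zero => rw [shaftValue_zero]; exact mul_nonneg (Nat.cast_nonneg _) (tailSum_nonneg 0)
  | succ n ih => rw [shaftValue_succ]; exact add_nonneg ih (tailSum_nonneg _)

theorem shaftValue_monotone : Monotone (shaftValue l) :=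
  monotone_nat_of_le_succ fun _ => le_add_of_nonneg_right (tailSum_nonneg _)

theorem shaftValue_le_mul_tailSum (hs : Summable fun k => 1 / (l k : ℝ)) (hl : ∀ n, 0 < l n)
    (h : ∀ n, 1 ≤ ((l (n + 1) : ℝ) - l n - 1) * tailSum l (n + 1)) (n : ℕ) :
    shaftValue l n ≤ l n * tailSum l n := by
  induction n with
  | zero => exact shaftValue_zero.le
  | succ n ih =>
    have hl₀ : (l n : ℝ) ≠ 0 := (Nat.cast_pos.2 (hl n)).ne'
    have h₁ : (l n : ℝ) * tailSum l n = 1 + l n * tailSum l (n + 1) := by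
      rw [tailSum_eq_add hs n, mul_add, mul_one_div_cancel hl₀]
    rw [shaftValue_succ]
    linarith [h n]

end ShaftValue

noncomputable def combProfile (l : ℕ → ℕ) (a : ℕ → ℝ) (p : {p : ℕ × ℕ // p.2 ≤ l p.1}) : ℝ :=
  ((l p.1.1 : ℝ) - p.1.2) / (l p.1.1 : ℝ) * a p.1.1

namespace combProfile

variable {l : ℕ → ℕ} {a : ℕ → ℝ}

theorem apply_shaft {n : ℕ} (hl : 0 < l n) :
    combProfile l a ⟨(n, 0), Nat.zero_le _⟩ = a n := by
  simp [combProfile, (Nat.cast_pos.2 hl).ne']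

theorem apply_one {n : ℕ} (hl : 0 < l n) :
    combProfile l a ⟨(n, 1), hl⟩ = (1 - 1 / l n) * a n := by
  simp [combProfile, sub_div, (Nat.cast_pos.2 hl).ne']

theorem eq_zero_of_eq {p : {p : ℕ × ℕ // p.2 ≤ l p.1}} (hp : p.1.2 = l p.1.1) :
    combProfile l a p = 0 := by
  simp [combProfile, hp]

theorem abs_le (hl : ∀ n, 0 < l n) {M : ℝ} (ha : ∀ n, |a n| ≤ M)
    (p : {p : ℕ × ℕ // p.2 ≤ l p.1}) : |combProfile l a p| ≤ M := by
  have hpos : (0 : ℝ) < l p.1.1 := Nat.cast_pos.2 (hl _)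
  have hk : (p.1.2 : ℝ) ≤ l p.1.1 := by exact_mod_cast p.2
  have h₀ : 0 ≤ ((l p.1.1 : ℝ) - p.1.2) / l p.1.1 := div_nonneg (by linarith) hpos.le
  have h₁ : ((l p.1.1 : ℝ) - p.1.2) / l p.1.1 ≤ 1 := by
    rw [div_le_one hpos]; linarith [(p.1.2).cast_nonneg (α := ℝ)]
  rw [combProfile, abs_mul, abs_of_nonneg h₀]
  exact (mul_le_of_le_one_left (abs_nonneg _) h₁).trans (ha _)

theorem infLap_tooth {n k : ℕ} (h₀ : 0 < k) (hk : k < l n) :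
    infLap (combGraph l) (combProfile l a) ⟨(n, k), hk.le⟩ = 0 := by
  rw [infLap_of_neighborSet_eq_pair (combGraph.neighborSet_tooth h₀ hk)]
  simp only [combProfile, Nat.cast_sub (Nat.one_le_of_lt h₀)]
  push_cast
  ring

theorem infLap_origin (hl : ∀ n, 0 < l n) :
    infLap (combGraph l) (combProfile l a) ⟨(0, 0), Nat.zero_le _⟩ = a 1 - a 0 - a 0 / l 0 := by
  rw [infLap_of_neighborSet_eq_pair (combGraph.neighborSet_origin (hl 0)), apply_one (hl 0),
    apply_shaft (hl 0), apply_shaft (hl 1)]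
  ring

theorem infLap_shaft_succ (hl : ∀ n, 0 < l n) {n : ℕ} (h₁ : a n ≤ a (n + 2))
    (h₂ : (1 - 1 / l (n + 1)) * a (n + 1) ≤ a (n + 2)) :
    infLap (combGraph l) (combProfile l a) ⟨(n + 1, 0), Nat.zero_le _⟩ =
      min (a n) ((1 - 1 / l (n + 1)) * a (n + 1)) + a (n + 2) - 2 * a (n + 1) := by
  rw [infLap_of_neighborSet_eq_triple (combGraph.neighborSet_shaft_succ (hl (n + 1)))] <;>
    simp only [apply_one, apply_shaft, hl, h₁, h₂]

theorem infLap_eq_neg_of_shaft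
    (hshaft : ∀ n, infLap (combGraph l) (combProfile l a) ⟨(n, 0), Nat.zero_le _⟩ = -1 / l n)
    (p : {p : ℕ × ℕ // p.2 ≤ l p.1}) (hp : p.1.2 < l p.1.1) :
    infLap (combGraph l) (combProfile l a) p = -(if p.1.2 = 0 then 1 / (l p.1.1 : ℝ) else 0) := by
  obtain ⟨⟨n, k⟩, hk⟩ := p
  rcases Nat.eq_zero_or_pos k with rfl | h₀
  · simpa [neg_div] using hshaft n
  · simpa [h₀.ne'] using infLap_tooth h₀ hp

theorem infLap_one (hl : ∀ n, 0 < l n) (n : ℕ) :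
    infLap (combGraph l) (combProfile l 1) ⟨(n, 0), Nat.zero_le _⟩ = -1 / l n := by
  cases n with
  | zero =>
    rw [infLap_origin hl]
    simp [neg_div]
  | succ n =>
    rw [infLap_shaft_succ hl le_rfl (by simp)]
    have h : (0 : ℝ) ≤ 1 / l (n + 1) := by positivity
    simp only [Pi.one_apply, mul_one, min_eq_right (sub_le_self 1 h)]
    ring

theorem infLap_shaftValue (hs : Summable fun k => 1 / (l k : ℝ)) (hl : ∀ n, 0 < l n)
    (hkey : ∀ n, shaftValue l n ≤ l n * tailSum l n) (n : ℕ) :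
    infLap (combGraph l) (combProfile l (shaftValue l)) ⟨(n, 0), Nat.zero_le _⟩ = -1 / l n := by
  cases n with
  | zero =>
    have h₀ : (l 0 : ℝ) ≠ 0 := (Nat.cast_pos.2 (hl 0)).ne'
    rw [infLap_origin hl, shaftValue_succ, shaftValue_zero, tailSum_eq_add hs 0]
    field_simp
    ring
  | succ n =>
    have hle := shaftValue_monotone (l := l)
    have htooth : shaftValue l n ≤ (1 - 1 / l (n + 1)) * shaftValue l (n + 1) := by
      have := (div_le_iff₀' (Nat.cast_pos.2 (hl (n + 1)))).2 (hkey (n + 1))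
      rw [sub_mul, one_mul, one_div_mul_eq_div]
      linarith [shaftValue_succ (l := l) n]
    rw [infLap_shaft_succ hl (hle (by omega)) ?_, min_eq_left htooth,
      shaftValue_succ (n + 1), shaftValue_succ n, tailSum_eq_add hs (n + 1)]
    · ring
    · exact (mul_le_of_le_one_left (shaftValue_nonneg _) (by simp)).trans (hle (by omega))

end combProfile

theorem tailSum_cube (C n : ℕ) :
    tailSum (fun n => (n + C) ^ 3) n = ∑' k : ℕ, 1 / ((n + C : ℝ) + k) ^ 3 :=
  tsum_congr fun k => by push_cast; ring

theorem summable_one_div_cube (C : ℕ) : Summable fun k => 1 / (((k + C) ^ 3 : ℕ) : ℝ) :=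
  (summable_one_div_add_pow_three C).congr fun k => by push_cast; ring

theorem shaftValue_cube_le_mul_tailSum {C : ℕ} (hC : 2 ≤ C) (n : ℕ) :
    shaftValue (fun n => (n + C) ^ 3) n ≤
      ((n + C) ^ 3 : ℕ) * tailSum (fun n => (n + C) ^ 3) n := by
  refine shaftValue_le_mul_tailSum (summable_one_div_cube C) (fun n => by positivity)
    (fun n => ?_) n
  have hx : (2 : ℝ) ≤ n + C := by norm_cast; omega
  have hT := one_div_two_mul_sq_le_tsum_one_div_add_pow_three (x := (n + C : ℝ) + 1) (by linarith)
  rw [tailSum_cube]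
  push_cast
  rw [add_right_comm]
  set x : ℝ := n + C
  have h : 1 ≤ ((x + 1) ^ 3 - x ^ 3 - 1) * (1 / (2 * (x + 1) ^ 2)) := by
    rw [mul_one_div, le_div_iff₀ (by positivity)]
    nlinarith
  exact h.trans (mul_le_mul_of_nonneg_left hT (by nlinarith))

theorem shaftValue_cube_add_le {C : ℕ} (hC : 0 < C) (n : ℕ) :
    shaftValue (fun n => (n + C) ^ 3) n + 1 / (2 * (n + C : ℝ)) ≤
      shaftValue (fun n => (n + C) ^ 3) 0 + 1 / (2 * C) := by
  induction n with
  | zero => simp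
  | succ n ih =>
    have hx : (1 : ℝ) ≤ n + C := by norm_cast; omega
    have hT := tsum_one_div_add_pow_three_le (x := (n + C : ℝ) + 1) (by linarith)
    rw [shaftValue_succ, tailSum_cube]
    push_cast
    rw [add_right_comm (n : ℝ)]
    have h : 1 / (2 * ((n + C : ℝ) + 1 - 1) * (n + C + 1)) =
        1 / (2 * (n + C : ℝ)) - 1 / (2 * (n + C + 1)) := by
      have : (n + C : ℝ) ≠ 0 := by positivity
      rw [add_sub_cancel_right]
      field_simp
      ring
    linarith

theorem one_lt_shaftValue_cube_zero {C : ℕ} (hC : 0 < C) :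
    1 < shaftValue (fun n => (n + C) ^ 3) 0 := by
  have hT := one_div_two_mul_sq_le_tsum_one_div_add_pow_three (x := (1 + C : ℝ)) (by positivity)
  rw [shaftValue_zero, tailSum_eq_add (summable_one_div_cube C), tailSum_cube]
  push_cast
  rw [zero_add, mul_add, mul_one_div_cancel (by positivity)]
  have hT₁ : 0 < ∑' k : ℕ, 1 / (1 + C + k : ℝ) ^ 3 := (by positivity : (0 : ℝ) < _).trans_le hT
  exact lt_add_of_pos_right _ (mul_pos (by positivity) hT₁)

/-- Multiple bounded solutions on the comb graph with tooth lengths `l n = (n+C)³`, `C ≥ 2`: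
both `u(n,k) = (l_n-k)/l_n` and `v(n,k) = ((l_n-k)/l_n)·v(n,0)` (with the shaft values defined
recursively) are bounded solutions of `Δ∞ · = -f` for `k < l n` with value `0` at `k = l n`,
where `f(n,0) = 1/l_n`, `f(n,k) = 0` for `0 < k < l n`; and `u ≠ v`. -/
theorem stmt_17 (Cn : ℕ) (hC : 2 ≤ Cn) :
    let l : ℕ → ℕ := fun n => (n + Cn) ^ 3
    let u : {p : ℕ × ℕ // p.2 ≤ l p.1} → ℝ :=
      fun p => ((l p.1.1 : ℝ) - p.1.2) / (l p.1.1 : ℝ)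
    let v : {p : ℕ × ℕ // p.2 ≤ l p.1} → ℝ :=
      fun p => (((l p.1.1 : ℝ) - p.1.2) / (l p.1.1 : ℝ)) * shaftValue l p.1.1
    let f : {p : ℕ × ℕ // p.2 ≤ l p.1} → ℝ :=
      fun p => if p.1.2 = 0 then 1 / (l p.1.1 : ℝ) else 0
    (∃ M, ∀ p, |u p| ≤ M) ∧ (∃ M, ∀ p, |v p| ≤ M) ∧
    (∀ p : {p : ℕ × ℕ // p.2 ≤ l p.1}, p.1.2 < l p.1.1 →
      infLap (combGraph l) u p = -(f p) ∧ infLap (combGraph l) v p = -(f p)) ∧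
    (∀ p : {p : ℕ × ℕ // p.2 ≤ l p.1}, p.1.2 = l p.1.1 → u p = 0 ∧ v p = 0) ∧
    u ≠ v := by
  intro l u v f
  have hl : ∀ n, 0 < l n := fun n => pow_pos (by omega) 3
  have hu : u = combProfile l 1 := funext fun p => (mul_one _).symm
  have hv : v = combProfile l (shaftValue l) := rfl
  rw [hu, hv]
  have hshaft_v := combProfile.infLap_shaftValue (summable_one_div_cube Cn) hl
    (shaftValue_cube_le_mul_tailSum hC)
  refine ⟨⟨1, combProfile.abs_le hl fun _ => by simp⟩,
    ⟨shaftValue l 0 + 1 / (2 * Cn), ?_⟩,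
    fun p hp => ⟨combProfile.infLap_eq_neg_of_shaft (combProfile.infLap_one hl) p hp,
      combProfile.infLap_eq_neg_of_shaft hshaft_v p hp⟩,
    fun p hp => ⟨combProfile.eq_zero_of_eq hp, combProfile.eq_zero_of_eq hp⟩, fun h => ?_⟩
  · refine combProfile.abs_le hl fun n => ?_
    rw [abs_of_nonneg (shaftValue_nonneg n)]
    have h : 0 ≤ 1 / (2 * (n + Cn : ℝ)) := by positivity
    linarith [shaftValue_cube_add_le (C := Cn) (by omega) n]
  · have := congrFun h ⟨(0, 0), Nat.zero_le _⟩
    rw [combProfile.apply_shaft (hl 0), combProfile.apply_shaft (hl 0)] at this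
    exact (one_lt_shaftValue_cube_zero (C := Cn) (by omega)).ne this
end
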